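/- Assume the separation and scale hypotheses. Let V ∈ 𝒱_m and ξ ∈ Ξ(V). Then Υ(ξ) ⊆ Ξ(V), every η ∈ Υ(ξ) satisfies η − ξ ∈ V, and |η − η'| ≤ 2·√m·L_m for all η, η' ∈ Υ(ξ); in particular Υ(ξ) has diameter at most 2√m·L_m. -/

import Mathlib

open scoped RealInnerProductSpace

noncomputable section

/-- `V` is a quasi-lattice subspace of dimension `m` generated by the frequency set `Θ`. -/
def QL (d : ℕ) (Θ : Finset (EuclideanSpace ℝ (Fin d))) (m : ℕ)
    (V : Submodule ℝ (EuclideanSpace ℝ (Fin d))) : Prop :=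
  ∃ v : Fin m → EuclideanSpace ℝ (Fin d),
    (∀ i, v i ∈ Θ) ∧ LinearIndependent ℝ v ∧ V = Submodule.span ℝ (Set.range v)

/-- `V` is a quasi-lattice subspace (of some dimension). -/
def QLat (d : ℕ) (Θ : Finset (EuclideanSpace ℝ (Fin d)))
    (V : Submodule ℝ (EuclideanSpace ℝ (Fin d))) : Prop :=
  ∃ m, QL d Θ m V

/-- `Ξ₁(V)`: the union, over all flags `F` generated by `V` (with a generated sequence `ν`),
of the slabs `Λ(F) = {ξ : |⟪ξ, ν j⟫| ≤ L j}`. -/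
def XiOne (d : ℕ) (Θ : Finset (EuclideanSpace ℝ (Fin d))) (L : ℕ → ℝ)
    (V : Submodule ℝ (EuclideanSpace ℝ (Fin d))) : Set (EuclideanSpace ℝ (Fin d)) :=
  {ξ | ∃ (m : ℕ) (F : Fin (m + 1) → Submodule ℝ (EuclideanSpace ℝ (Fin d)))
        (ν : Fin m → EuclideanSpace ℝ (Fin d)),
      (∀ j : Fin (m + 1), QL d Θ (j : ℕ) (F j)) ∧
      (∀ i : Fin m, F i.castSucc < F i.succ) ∧
      F (Fin.last m) = V ∧
      (∀ i : Fin m, ‖ν i‖ = 1 ∧ ν i ∈ F i.succ ∧ ν i ∈ (F i.castSucc)ᗮ) ∧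
      (∀ i : Fin m, |⟪ξ, ν i⟫| ≤ L ((i : ℕ) + 1))}

/-- The resonance region `Ξ(V) = Ξ₁(V) \ ⋃_{U ⊋ V} Ξ₁(U)`. -/
def Xi (d : ℕ) (Θ : Finset (EuclideanSpace ℝ (Fin d))) (L : ℕ → ℝ)
    (V : Submodule ℝ (EuclideanSpace ℝ (Fin d))) : Set (EuclideanSpace ℝ (Fin d)) :=
  XiOne d Θ L V \
    ⋃ U ∈ {U : Submodule ℝ (EuclideanSpace ℝ (Fin d)) | QLat d Θ U ∧ V < U},
      XiOne d Θ L U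

/-- The resonance zone `Λ(θ) = {ξ : |⟪ξ, θ⟫| ≤ L 1 · ‖θ‖}` generated by `θ`. -/
def LamT (d : ℕ) (L : ℕ → ℝ) (θ : EuclideanSpace ℝ (Fin d)) :
    Set (EuclideanSpace ℝ (Fin d)) :=
  {ξ | |⟪ξ, θ⟫| ≤ L 1 * ‖θ‖}

/-- One step of resonant congruence: `ξ` and `η` are `θ`-resonant congruent for some
nonzero `θ ∈ Θ`, i.e. both lie in `Λ(θ)` and differ by an integer multiple of `θ`. -/
def ResStep (d : ℕ) (Θ : Finset (EuclideanSpace ℝ (Fin d))) (L : ℕ → ℝ)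
    (ξ η : EuclideanSpace ℝ (Fin d)) : Prop :=
  ∃ θ ∈ Θ, θ ≠ 0 ∧ ξ ∈ LamT d L θ ∧ η ∈ LamT d L θ ∧ ∃ l : ℤ, ξ - η = (l : ℝ) • θ

/-- `Υ(ξ)`: the set of all points resonant congruent to `ξ` (chains of resonant steps,
including the empty chain). -/
def Ups (d : ℕ) (Θ : Finset (EuclideanSpace ℝ (Fin d))) (L : ℕ → ℝ)
    (ξ : EuclideanSpace ℝ (Fin d)) : Set (EuclideanSpace ℝ (Fin d)) :=
  {η | Relation.ReflTransGen (ResStep d Θ L) ξ η}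

/-!
Every point of `Ξ₁(U)` lies in the slabs `Λ(F)` of a flag `F` of `U`; since the generated
sequence is an orthonormal basis of `U`, its projection to `U` has norm at most `√m · L_m`.
If `ξ ∈ Ξ(V)` is `θ`-resonant then `θ ∈ V`: otherwise inserting `θ` in front of a flag of `V`
gives a flag of `ℝθ ⊕ V` whose slabs contain `ξ` (the first because `ξ ∈ Λ(θ)`, the later new
ones by the separation hypothesis and the gaps between the scales `L_j`). The same insertion in a
flag of any `U ∋ θ` shows that a resonant step along `θ` preserves `Ξ₁(U)` in both directions,
hence preserves `Ξ(V)` and stays in a translate of `V`. So `Υ(ξ) ⊆ Ξ(V) ∩ (ξ + V)`, and two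
points of `Ξ₁(V)` differing by a vector of `V` are at distance at most `2√m · L_m`.
-/

section InnerProduct

variable {E : Type*} [NormedAddCommGroup E] [InnerProductSpace ℝ E]

theorem norm_orthogonalProjectionOnto_le_of_orthonormal {ι : Type*} [Fintype ι]
    {K : Submodule ℝ E} [FiniteDimensional ℝ K] {v : ι → E} (hv : Orthonormal ℝ v)
    (hvK : ∀ i, v i ∈ K) (hcard : Fintype.card ι = Module.finrank ℝ K) {x : E} {C : ℝ}
    (hC : ∀ i, |⟪x, v i⟫| ≤ C) :
    ‖K.orthogonalProjectionOnto x‖ ≤ √(Fintype.card ι) * C := by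
  have hv' := hv.codRestrict K hvK
  let b := OrthonormalBasis.mk hv'
    (hv'.linearIndependent.span_eq_top_of_card_eq_finrank' hcard).ge
  have hsq : ‖K.orthogonalProjectionOnto x‖ ^ 2 ≤ Fintype.card ι * C ^ 2 := by
    rw [← b.sum_sq_inner_right]
    calc ∑ i, ⟪b i, K.orthogonalProjectionOnto x⟫ ^ 2 ≤ ∑ _i : ι, C ^ 2 := by
          refine Finset.sum_le_sum fun i _ => ?_
          rw [Submodule.inner_orthogonalProjectionOnto_eq_of_mem_left, OrthonormalBasis.coe_mk,
            Set.val_codRestrict_apply, real_inner_comm, ← sq_abs]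
          exact pow_le_pow_left₀ (abs_nonneg _) (hC i) 2
      _ = Fintype.card ι * C ^ 2 := by simp
  rcases isEmpty_or_nonempty ι with hι | ⟨⟨i⟩⟩
  · simpa using hsq
  · have hC0 : 0 ≤ C := (abs_nonneg _).trans (hC i)
    rw [← Real.sqrt_sq hC0, ← Real.sqrt_mul (Nat.cast_nonneg _)]
    exact Real.le_sqrt_of_sq_le hsq

theorem abs_inner_le_norm_orthogonalProjectionOnto {K : Submodule ℝ E}
    [K.HasOrthogonalProjection] {w : E} (hwK : w ∈ K) (hw : ‖w‖ = 1) (x : E) :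
    |⟪x, w⟫| ≤ ‖K.orthogonalProjectionOnto x‖ := by
  rw [← Submodule.inner_orthogonalProjectionOnto_eq_of_mem_right ⟨w, hwK⟩]
  simpa [hw] using abs_real_inner_le_norm (K.orthogonalProjectionOnto x) ⟨w, hwK⟩

theorem exists_norm_eq_one_mem_orthogonal_inf {K₁ K₂ : Submodule ℝ E} [FiniteDimensional ℝ K₂]
    (hle : K₁ ≤ K₂) (hlt : Module.finrank ℝ K₁ < Module.finrank ℝ K₂) :
    ∃ w : E, ‖w‖ = 1 ∧ w ∈ K₂ ∧ w ∈ K₁ᗮ := by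
  have hne : K₁ᗮ ⊓ K₂ ≠ ⊥ := by
    intro h
    have := Submodule.finrank_add_inf_finrank_orthogonal hle
    rw [h, finrank_bot] at this
    omega
  obtain ⟨v, ⟨hv₁, hv₂⟩, hv0⟩ := Submodule.exists_mem_ne_zero_of_ne_bot hne
  exact ⟨‖v‖⁻¹ • v, norm_smul_inv_norm hv0, K₂.smul_mem _ hv₂, K₁ᗮ.smul_mem _ hv₁⟩

theorem inner_eq_of_sub_mem_of_mem_orthogonal {K : Submodule ℝ E} {x y w : E}
    (hxy : x - y ∈ K) (hw : w ∈ Kᗮ) : ⟪x, w⟫ = ⟪y, w⟫ := by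
  rw [← sub_eq_zero, ← inner_sub_left]
  exact K.inner_right_of_mem_orthogonal hxy hw

theorem norm_orthogonalProjectionOnto_span_singleton (v x : E) :
    ‖(ℝ ∙ v).orthogonalProjectionOnto x‖ = |⟪x, v⟫| / ‖v‖ := by
  rw [← Submodule.norm_coe, ← Submodule.starProjection_apply, Submodule.starProjection_singleton,
    norm_smul, real_inner_comm]
  rcases eq_or_ne v 0 with rfl | hv
  · simp
  · simp only [RCLike.ofReal_real_eq_id, id, norm_div, norm_pow, Real.norm_eq_abs, abs_norm]
    field_simp

end InnerProduct

variable {d : ℕ} {Θ : Finset (EuclideanSpace ℝ (Fin d))} {L : ℕ → ℝ}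

local notation "E" => EuclideanSpace ℝ (Fin d)

namespace QL

variable {m : ℕ} {V : Submodule ℝ (EuclideanSpace ℝ (Fin d))}

theorem finrank_eq (h : QL d Θ m V) : Module.finrank ℝ V = m := by
  obtain ⟨v, -, hli, rfl⟩ := h
  rw [finrank_span_eq_card hli, Fintype.card_fin]

theorem le_dim (h : QL d Θ m V) : m ≤ d := by
  simpa [h.finrank_eq] using Submodule.finrank_le V

theorem eq_bot (h : QL d Θ 0 V) : V = ⊥ :=
  Submodule.finrank_eq_zero.1 h.finrank_eq

theorem bot : QL d Θ 0 (⊥ : Submodule ℝ E) :=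
  ⟨Fin.elim0, fun i => i.elim0, linearIndependent_empty_type, by simp⟩

theorem span_singleton_sup (h : QL d Θ m V) {θ : E} (hθ : θ ∈ Θ) (hθV : θ ∉ V) :
    QL d Θ (m + 1) ((ℝ ∙ θ) ⊔ V) := by
  obtain ⟨v, hv, hli, rfl⟩ := h
  refine ⟨Fin.cons θ v, Fin.cases hθ hv, hli.finCons hθV, ?_⟩
  rw [Fin.range_cons, Submodule.span_insert]

theorem span_singleton {θ : E} (hθ : θ ∈ Θ) (hθ0 : θ ≠ 0) : QL d Θ 1 (ℝ ∙ θ) := by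
  simpa using bot.span_singleton_sup hθ (by simpa using hθ0)

end QL

/-- A flag `F 0 < ⋯ < F u` with `F n ∈ 𝒱_n`, indexed by `ℕ` and merely monotone beyond `u`. -/
structure IsFlag (Θ : Finset E) (u : ℕ) (F : ℕ → Submodule ℝ E) : Prop where
  monotone : Monotone F
  ql : ∀ n ≤ u, QL d Θ n (F n)

/-- The `j`-th slab of `Λ(F)`. Since `F (j + 1) ⊓ (F j)ᗮ` is a line, the unit normal `w` is
`±ν (j + 1)`, so the existential quantifier loses nothing. -/
def InSlab (L : ℕ → ℝ) (F : ℕ → Submodule ℝ E) (j : ℕ) (ξ : E) : Prop :=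
  ∃ w : E, ‖w‖ = 1 ∧ w ∈ F (j + 1) ∧ w ∈ (F j)ᗮ ∧ |⟪ξ, w⟫| ≤ L (j + 1)

namespace IsFlag

variable {u : ℕ} {F : ℕ → Submodule ℝ (EuclideanSpace ℝ (Fin d))}

theorem zero_eq_bot (hF : IsFlag Θ u F) : F 0 = ⊥ :=
  (hF.ql 0 (Nat.zero_le u)).eq_bot

theorem norm_orthogonalProjectionOnto_le (hL : MonotoneOn L (Set.Icc 1 d))
    (hF : IsFlag Θ u F) {ξ : E} (hξ : ∀ j < u, InSlab L F j ξ) {n : ℕ} (hn : n ≤ u) :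
    ‖(F n).orthogonalProjectionOnto ξ‖ ≤ √n * L n := by
  choose ν hν_norm hν_mem hν_orth hν_slab using hξ
  have hnd : n ≤ d := (hF.ql n hn).le_dim
  let v : Fin n → E := fun i => ν i (i.2.trans_le hn)
  have hvF : ∀ i j : Fin n, i < j → v i ∈ F j :=
    fun i j hij => hF.monotone (Nat.succ_le_of_lt hij) (hν_mem _ _)
  have hv : Orthonormal ℝ v := by
    refine ⟨fun i => hν_norm _ _, fun i j hij => ?_⟩
    rcases hij.lt_or_gt with hij | hij
    · exact (F j).inner_right_of_mem_orthogonal (hvF i j hij) (hν_orth _ _)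
    · exact (F i).inner_left_of_mem_orthogonal (hvF j i hij) (hν_orth _ _)
  simpa using norm_orthogonalProjectionOnto_le_of_orthonormal hv
    (fun i => hF.monotone (Nat.succ_le_of_lt i.2) (hν_mem _ _))
    (by rw [Fintype.card_fin, (hF.ql n hn).finrank_eq])
    fun i => (hν_slab _ _).trans <|
      hL ⟨Nat.le_add_left 1 i, i.2.trans_le hnd⟩ ⟨Nat.one_le_of_lt i.2, hnd⟩ i.2

end IsFlag

theorem mem_xiOne_iff {u : ℕ} {U : Submodule ℝ E} (hU : QL d Θ u U) {ξ : E} :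
    ξ ∈ XiOne d Θ L U ↔ ∃ F, IsFlag Θ u F ∧ F u = U ∧ ∀ j < u, InSlab L F j ξ := by
  constructor
  · rintro ⟨u', G, ν, hG, hlt, rfl, hν, hξ⟩
    obtain rfl : u' = u := by
      rw [← hU.finrank_eq, (hG (Fin.last u')).finrank_eq, Fin.val_last]
    refine ⟨fun n => G (Fin.clamp n u'), ⟨(Fin.strictMono_iff_lt_succ.2 hlt).monotone.comp
      Fin.clamp_monotone, fun n hn => ?_⟩, by simp [Fin.clamp_eq_last], fun j hj => ⟨ν ⟨j, hj⟩, ?_⟩⟩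
    · have : Fin.clamp n u' = ⟨n, by omega⟩ := Fin.ext (min_eq_left hn)
      simpa [this] using hG ⟨n, by omega⟩
    · have h₀ : Fin.clamp j u' = (⟨j, hj⟩ : Fin u').castSucc := Fin.ext (by simp; omega)
      have h₁ : Fin.clamp (j + 1) u' = (⟨j, hj⟩ : Fin u').succ := Fin.ext (by simp; omega)
      simp only [h₀, h₁]
      exact ⟨(hν _).1, (hν _).2.1, (hν _).2.2, hξ _⟩
  · rintro ⟨F, hF, rfl, hξ⟩
    choose ν hν_norm hν_mem hν_orth hν_slab using fun i : Fin u => hξ i i.2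
    refine ⟨u, fun j => F j, ν, fun j => hF.ql j (by omega), fun i => ?_, rfl,
      fun i => ⟨hν_norm i, hν_mem i, hν_orth i⟩, hν_slab⟩
    refine Submodule.lt_of_le_of_finrank_lt_finrank (hF.monotone (by simp)) ?_
    rw [(hF.ql _ (by simp)).finrank_eq, (hF.ql _ (by simp)).finrank_eq]
    simp

open Classical in
/-- The flag `ℝθ ⊔ F 0, …, ℝθ ⊔ F (k - 1) = F k, F (k + 1), …` preceded by `⊥`, where `k` is
the first index with `θ ∈ F k`; it turns `θ` into the first vector of the generated sequence. -/
def insertFlag (θ : E) (F : ℕ → Submodule ℝ E) : ℕ → Submodule ℝ E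
  | 0 => ⊥
  | n + 1 => if θ ∈ F n then F (n + 1) else (ℝ ∙ θ) ⊔ F n

section insertFlag

variable {θ : EuclideanSpace ℝ (Fin d)} {F : ℕ → Submodule ℝ (EuclideanSpace ℝ (Fin d))}
  {u n : ℕ}

theorem insertFlag_succ_of_mem (h : θ ∈ F n) : insertFlag θ F (n + 1) = F (n + 1) := by
  rw [insertFlag, if_pos h]

theorem insertFlag_succ_of_notMem (h : θ ∉ F n) : insertFlag θ F (n + 1) = (ℝ ∙ θ) ⊔ F n := by
  rw [insertFlag, if_neg h]

theorem insertFlag_le (hF : Monotone F) : ∀ n, insertFlag θ F n ≤ (ℝ ∙ θ) ⊔ F n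
  | 0 => bot_le
  | n + 1 => by
    by_cases h : θ ∈ F n
    · exact (insertFlag_succ_of_mem h).trans_le le_sup_right
    · exact (insertFlag_succ_of_notMem h).trans_le (sup_le_sup_left (hF n.le_succ) _)

theorem sup_le_insertFlag_succ (hF : Monotone F) (n : ℕ) :
    (ℝ ∙ θ) ⊔ F n ≤ insertFlag θ F (n + 1) := by
  by_cases h : θ ∈ F n
  · rw [insertFlag_succ_of_mem h]
    exact sup_le ((Submodule.span_singleton_le_iff_mem _ _).2 (hF n.le_succ h)) (hF n.le_succ)
  · rw [insertFlag_succ_of_notMem h]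

theorem monotone_insertFlag (hF : Monotone F) : Monotone (insertFlag θ F) :=
  monotone_nat_of_le_succ fun n => (insertFlag_le hF n).trans (sup_le_insertFlag_succ hF n)

theorem span_singleton_le_insertFlag (hF : Monotone F) (hn : 1 ≤ n) :
    ℝ ∙ θ ≤ insertFlag θ F n := by
  obtain ⟨n, rfl⟩ := Nat.exists_eq_add_of_le' hn
  exact le_sup_left.trans (sup_le_insertFlag_succ hF n)

theorem IsFlag.ql_insertFlag (hF : IsFlag Θ u F) (hθ : θ ∈ Θ) (hn : n ≤ u) :
    QL d Θ n (insertFlag θ F n) := by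
  cases n with
  | zero => exact QL.bot
  | succ n =>
    by_cases h : θ ∈ F n
    · rw [insertFlag_succ_of_mem h]
      exact hF.ql _ hn
    · rw [insertFlag_succ_of_notMem h]
      exact (hF.ql n (by omega)).span_singleton_sup hθ h

theorem IsFlag.insertFlag_eq (hF : IsFlag Θ u F) (hθ : θ ∈ Θ) (hn : n ≤ u) (hθn : θ ∈ F n) :
    insertFlag θ F n = F n := by
  refine Submodule.eq_of_le_of_finrank_eq ?_ (by
    rw [(hF.ql_insertFlag hθ hn).finrank_eq, (hF.ql n hn).finrank_eq])
  calc insertFlag θ F n ≤ (ℝ ∙ θ) ⊔ F n := insertFlag_le hF.monotone n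
    _ = F n := sup_eq_right.2 ((Submodule.span_singleton_le_iff_mem _ _).2 hθn)

theorem IsFlag.insertFlag_of_mem (hF : IsFlag Θ u F) (hθ : θ ∈ Θ) :
    IsFlag Θ u (insertFlag θ F) :=
  ⟨monotone_insertFlag hF.monotone, fun _ => hF.ql_insertFlag hθ⟩

theorem IsFlag.insertFlag_of_notMem (hF : IsFlag Θ u F) (hθ : θ ∈ Θ) (hθu : θ ∉ F u) :
    IsFlag Θ (u + 1) (insertFlag θ F) := by
  refine ⟨monotone_insertFlag hF.monotone, fun n hn => ?_⟩
  rcases Nat.lt_succ_iff_lt_or_eq.1 (Nat.lt_succ_of_le hn) with hn | rfl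
  · exact hF.ql_insertFlag hθ (Nat.lt_succ_iff.1 hn)
  · rw [insertFlag_succ_of_notMem hθu]
    exact (hF.ql u le_rfl).span_singleton_sup hθ hθu

theorem IsFlag.inSlab_insertFlag_of_mem (hF : IsFlag Θ u F) (hθ : θ ∈ Θ) {j : ℕ} (hj : j < u)
    (hθj : θ ∈ F j) {ξ η : E} (hη : InSlab L F j η) (hξη : ξ - η ∈ ℝ ∙ θ) :
    InSlab L (insertFlag θ F) j ξ := by
  obtain ⟨w, hw, hwF, hwo, hηw⟩ := hη
  refine ⟨w, hw, ?_, ?_, ?_⟩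
  · rwa [hF.insertFlag_eq hθ hj (hF.monotone j.le_succ hθj)]
  · rwa [hF.insertFlag_eq hθ hj.le hθj]
  · rwa [inner_eq_of_sub_mem_of_mem_orthogonal
      ((Submodule.span_singleton_le_iff_mem _ _).2 hθj hξη) hwo]

end insertFlag

theorem norm_orthogonalProjectionOnto_span_le_of_mem_lamT {θ ξ : E} (hθ0 : θ ≠ 0)
    (hξ : ξ ∈ LamT d L θ) :
    ‖(ℝ ∙ θ).orthogonalProjectionOnto ξ‖ ≤ L 1 := by
  rw [norm_orthogonalProjectionOnto_span_singleton, div_le_iff₀ (norm_pos_iff.2 hθ0)]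
  exact hξ

structure ResonanceHyp (Θ : Finset E) (L : ℕ → ℝ) (s R : ℝ) : Prop where
  L_one_pos : 0 < L 1
  monotoneOn : MonotoneOn L (Set.Icc 1 d)
  s_pos : 0 < s
  sep : ∀ U V : Submodule ℝ E, QLat d Θ U → QLat d Θ V → ¬ U ≤ V → ¬ V ≤ U → ∀ ξ : E,
    ‖(U ⊔ V).orthogonalProjectionOnto ξ‖ ≤
      (‖U.orthogonalProjectionOnto ξ‖ + ‖V.orthogonalProjectionOnto ξ‖) / s
  norm_le : ∀ θ ∈ Θ, ‖θ‖ ≤ R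
  scale : ∀ j, 1 ≤ j → j + 1 ≤ d → 2 * d * L j / s + R ≤ L (j + 1)

namespace ResonanceHyp

variable {s R : ℝ}

/-- Adding one direction `θ ∉ W` costs at most a factor `2d/s`, which the gap between
consecutive scales absorbs. -/
theorem norm_orthogonalProjectionOnto_span_sup_le (H : ResonanceHyp Θ L s R) {θ : E}
    (hθ : θ ∈ Θ) (hθ0 : θ ≠ 0) {n : ℕ} {W : Submodule ℝ E} (hW : QL d Θ n W) (hn : 1 ≤ n)
    (hθW : θ ∉ W) {η : E} (hη : η ∈ LamT d L θ)
    (hηW : ‖W.orthogonalProjectionOnto η‖ ≤ √n * L n) :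
    ‖((ℝ ∙ θ) ⊔ W).orthogonalProjectionOnto η‖ ≤ L (n + 1) := by
  have hsup := hW.span_singleton_sup hθ hθW
  have hnd : n + 1 ≤ d := hsup.le_dim
  have hWθ : ¬ W ≤ ℝ ∙ θ := fun h => by
    have := hsup.finrank_eq
    rw [sup_eq_left.2 h, finrank_span_singleton hθ0] at this
    omega
  have hL1n : L 1 ≤ L n := H.monotoneOn ⟨le_rfl, by omega⟩ ⟨hn, by omega⟩ hn
  have hLn : 0 < L n := H.L_one_pos.trans_le hL1n
  have hsqrt : √n * L n ≤ n * L n := by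
    gcongr
    exact Real.sqrt_le_self_iff.2 (Or.inr (Nat.one_le_cast.2 hn))
  have hθη := norm_orthogonalProjectionOnto_span_le_of_mem_lamT hθ0 hη
  have hnd' : (n : ℝ) + 1 ≤ d := by exact_mod_cast hnd
  have hs := H.s_pos
  calc ‖((ℝ ∙ θ) ⊔ W).orthogonalProjectionOnto η‖
      ≤ (‖(ℝ ∙ θ).orthogonalProjectionOnto η‖ + ‖W.orthogonalProjectionOnto η‖) / s :=
        H.sep _ _ ⟨1, QL.span_singleton hθ hθ0⟩ ⟨n, hW⟩
          (by rwa [Submodule.span_singleton_le_iff_mem]) hWθ η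
    _ ≤ 2 * d * L n / s := by gcongr; nlinarith
    _ ≤ L (n + 1) := by linarith [H.scale n hn hnd, (norm_nonneg θ).trans (H.norm_le θ hθ)]

/-- For `j = 0` the new normal is `±θ / ‖θ‖` and `ξ ∈ Λ(θ)` suffices; for `j ≥ 1` it is
orthogonal to `θ ∈ insertFlag θ F j`, so `⟪ξ, w⟫ = ⟪η, w⟫` is controlled by the projection of
`η` onto `ℝθ ⊔ F j`. -/
theorem inSlab_insertFlag_of_notMem (H : ResonanceHyp Θ L s R) {u : ℕ}
    {F : ℕ → Submodule ℝ E} (hF : IsFlag Θ u F) {θ : E} (hθ : θ ∈ Θ) (hθ0 : θ ≠ 0) {j : ℕ}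
    (hj : j ≤ u) (hθj : θ ∉ F j) {ξ η : E} (hξθ : ξ ∈ LamT d L θ) (hηθ : η ∈ LamT d L θ)
    (hηF : ‖(F j).orthogonalProjectionOnto η‖ ≤ √j * L j) (hξη : ξ - η ∈ ℝ ∙ θ) :
    InSlab L (insertFlag θ F) j ξ := by
  have hsucc := insertFlag_succ_of_notMem hθj
  obtain ⟨w, hw, hwF, hwo⟩ := exists_norm_eq_one_mem_orthogonal_inf
    (monotone_insertFlag hF.monotone j.le_succ) (by
      rw [(hF.ql_insertFlag hθ hj).finrank_eq, hsucc,
        ((hF.ql j hj).span_singleton_sup hθ hθj).finrank_eq]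
      omega)
  refine ⟨w, hw, hwF, hwo, ?_⟩
  rw [hsucc] at hwF
  rcases Nat.eq_zero_or_pos j with rfl | hj0
  · rw [hF.zero_eq_bot, sup_bot_eq] at hwF
    exact (abs_inner_le_norm_orthogonalProjectionOnto hwF hw ξ).trans
      (norm_orthogonalProjectionOnto_span_le_of_mem_lamT hθ0 hξθ)
  · rw [inner_eq_of_sub_mem_of_mem_orthogonal (span_singleton_le_insertFlag hF.monotone hj0 hξη)
      hwo]
    exact (abs_inner_le_norm_orthogonalProjectionOnto hwF hw η).trans
      (H.norm_orthogonalProjectionOnto_span_sup_le hθ hθ0 (hF.ql j hj) hj0 hθj hηθ hηF)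

theorem mem_xiOne_of_sub_mem_span (H : ResonanceHyp Θ L s R) {u : ℕ} {U : Submodule ℝ E}
    (hU : QL d Θ u U) {θ : E} (hθ : θ ∈ Θ) (hθ0 : θ ≠ 0) (hθU : θ ∈ U) {ξ η : E}
    (hξθ : ξ ∈ LamT d L θ) (hηθ : η ∈ LamT d L θ) (hξη : ξ - η ∈ ℝ ∙ θ)
    (hη : η ∈ XiOne d Θ L U) : ξ ∈ XiOne d Θ L U := by
  obtain ⟨F, hF, rfl, hslab⟩ := (mem_xiOne_iff hU).1 hη
  refine (mem_xiOne_iff hU).2 ⟨insertFlag θ F, hF.insertFlag_of_mem hθ,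
    hF.insertFlag_eq hθ le_rfl hθU, fun j hj => ?_⟩
  by_cases hθj : θ ∈ F j
  · exact hF.inSlab_insertFlag_of_mem hθ hj hθj (hslab j hj) hξη
  · exact H.inSlab_insertFlag_of_notMem hF hθ hθ0 hj.le hθj hξθ hηθ
      (hF.norm_orthogonalProjectionOnto_le H.monotoneOn hslab hj.le) hξη

/-- Otherwise inserting `θ` into a flag of `V` would put `ξ` in `Ξ₁(ℝθ ⊔ V)`. -/
theorem mem_of_mem_xi_of_mem_lamT (H : ResonanceHyp Θ L s R) {m : ℕ} {V : Submodule ℝ E}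
    (hV : QL d Θ m V) {θ : E} (hθ : θ ∈ Θ) (hθ0 : θ ≠ 0) {ξ : E} (hξ : ξ ∈ Xi d Θ L V)
    (hξθ : ξ ∈ LamT d L θ) : θ ∈ V := by
  by_contra hθV
  obtain ⟨F, hF, rfl, hslab⟩ := (mem_xiOne_iff hV).1 hξ.1
  have hW := hV.span_singleton_sup hθ hθV
  refine hξ.2 (Set.mem_biUnion (x := (ℝ ∙ θ) ⊔ F m)
    ⟨⟨m + 1, hW⟩, right_lt_sup.2 (by rwa [Submodule.span_singleton_le_iff_mem])⟩ ?_)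
  refine (mem_xiOne_iff hW).2 ⟨insertFlag θ F, hF.insertFlag_of_notMem hθ hθV,
    insertFlag_succ_of_notMem hθV, fun j hj => ?_⟩
  have hjm : j ≤ m := Nat.lt_succ_iff.1 hj
  exact H.inSlab_insertFlag_of_notMem hF hθ hθ0 hjm (fun h => hθV (hF.monotone hjm h)) hξθ hξθ
    (hF.norm_orthogonalProjectionOnto_le H.monotoneOn hslab hjm) (by simp)

theorem mem_xi_of_resStep (H : ResonanceHyp Θ L s R) {m : ℕ} {V : Submodule ℝ E}
    (hV : QL d Θ m V) {η ζ : E} (hη : η ∈ Xi d Θ L V) (h : ResStep d Θ L η ζ) :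
    ζ ∈ Xi d Θ L V ∧ ζ - η ∈ V := by
  obtain ⟨θ, hθ, hθ0, hηθ, hζθ, l, hl⟩ := h
  have hθV := H.mem_of_mem_xi_of_mem_lamT hV hθ hθ0 hη hηθ
  have hηζ : η - ζ ∈ ℝ ∙ θ := hl ▸ Submodule.smul_mem _ _ (Submodule.mem_span_singleton_self θ)
  have hζη : ζ - η ∈ ℝ ∙ θ := by simpa using neg_mem hηζ
  refine ⟨⟨H.mem_xiOne_of_sub_mem_span hV hθ hθ0 hθV hζθ hηθ hζη hη.1, ?_⟩,
    (Submodule.span_singleton_le_iff_mem _ _).2 hθV hζη⟩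
  simp only [Set.mem_iUnion]
  rintro ⟨U, ⟨⟨u, hU⟩, hVU⟩, hζU⟩
  exact hη.2 (Set.mem_biUnion ⟨⟨u, hU⟩, hVU⟩
    (H.mem_xiOne_of_sub_mem_span hU hθ hθ0 (hVU.le hθV) hηθ hζθ hηζ hζU))

theorem mem_xi_of_mem_ups (H : ResonanceHyp Θ L s R) {m : ℕ} {V : Submodule ℝ E}
    (hV : QL d Θ m V) {ξ : E} (hξ : ξ ∈ Xi d Θ L V) {η : E} (hη : η ∈ Ups d Θ L ξ) :
    η ∈ Xi d Θ L V ∧ η - ξ ∈ V := by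
  induction hη with
  | refl => simpa using hξ
  | tail _ hstep ih =>
    obtain ⟨hζ, hζV⟩ := H.mem_xi_of_resStep hV ih.1 hstep
    exact ⟨hζ, by simpa using add_mem hζV ih.2⟩

end ResonanceHyp

theorem norm_sub_le_of_mem_xiOne (hL : MonotoneOn L (Set.Icc 1 d)) {m : ℕ}
    {V : Submodule ℝ E} (hV : QL d Θ m V) {η η' : E} (hη : η ∈ XiOne d Θ L V)
    (hη' : η' ∈ XiOne d Θ L V) (hsub : η - η' ∈ V) : ‖η - η'‖ ≤ 2 * √m * L m := by
  have hP : ∀ ζ ∈ XiOne d Θ L V, ‖V.orthogonalProjectionOnto ζ‖ ≤ √m * L m := fun ζ hζ => by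
    obtain ⟨F, hF, rfl, hslab⟩ := (mem_xiOne_iff hV).1 hζ
    exact hF.norm_orthogonalProjectionOnto_le hL hslab le_rfl
  calc ‖η - η'‖ = ‖V.orthogonalProjectionOnto η - V.orthogonalProjectionOnto η'‖ := by
        rw [← map_sub, V.norm_orthogonalProjectionOnto_apply hsub]
    _ ≤ ‖V.orthogonalProjectionOnto η‖ + ‖V.orthogonalProjectionOnto η'‖ := norm_sub_le _ _
    _ ≤ 2 * √m * L m := by linarith [hP η hη, hP η' hη']

theorem ups_subset_xi_and_diameter_general (d : ℕ)
    (Θ : Finset (EuclideanSpace ℝ (Fin d)))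
    (L : ℕ → ℝ) (hL1 : 0 < L 1)
    (hLmono : ∀ j, 1 ≤ j → j < d → L j ≤ L (j + 1))
    (s : ℝ) (hs0 : 0 < s)
    (hsep : ∀ U V : Submodule ℝ (EuclideanSpace ℝ (Fin d)), QLat d Θ U → QLat d Θ V →
      ¬ U ≤ V → ¬ V ≤ U → ∀ ξ : EuclideanSpace ℝ (Fin d),
        ‖(Submodule.orthogonalProjectionOnto (U ⊔ V) ξ : EuclideanSpace ℝ (Fin d))‖ ≤
          (‖(Submodule.orthogonalProjectionOnto U ξ : EuclideanSpace ℝ (Fin d))‖ +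
            ‖(Submodule.orthogonalProjectionOnto V ξ : EuclideanSpace ℝ (Fin d))‖) / s)
    (R : ℝ) (hR : ∀ θ ∈ Θ, ‖θ‖ ≤ R)
    (hscale : ∀ j, 1 ≤ j → j + 1 ≤ d → 2 * d * L j / s + R ≤ L (j + 1))
    (m : ℕ) (V : Submodule ℝ (EuclideanSpace ℝ (Fin d))) (hV : QL d Θ m V)
    (ξ : EuclideanSpace ℝ (Fin d)) (hξ : ξ ∈ Xi d Θ L V) :
    (∀ η ∈ Ups d Θ L ξ, η ∈ Xi d Θ L V ∧ η - ξ ∈ V) ∧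
    (∀ η ∈ Ups d Θ L ξ, ∀ η' ∈ Ups d Θ L ξ,
      ‖η - η'‖ ≤ 2 * Real.sqrt m * L m) := by
  have hL : MonotoneOn L (Set.Icc 1 d) :=
    monotoneOn_of_le_succ Set.ordConnected_Icc fun j _ hj hj' =>
      hLmono j hj.1 (Order.succ_le_iff.mp hj'.2)
  have H : ResonanceHyp Θ L s R := ⟨hL1, hL, hs0, hsep, hR, hscale⟩
  have hups : ∀ η ∈ Ups d Θ L ξ, η ∈ Xi d Θ L V ∧ η - ξ ∈ V :=
    fun η hη => H.mem_xi_of_mem_ups hV hξ hη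
  refine ⟨hups, fun η hη η' hη' => norm_sub_le_of_mem_xiOne hL hV (hups η hη).1.1
    (hups η' hη').1.1 ?_⟩
  simpa using sub_mem (hups η hη).2 (hups η' hη').2

theorem ups_subset_xi_and_diameter (d : ℕ) (hd : 1 ≤ d)
    (Θ : Finset (EuclideanSpace ℝ (Fin d)))
    (h0 : (0 : EuclideanSpace ℝ (Fin d)) ∈ Θ)
    (hsym : ∀ θ ∈ Θ, -θ ∈ Θ)
    (hspan : Submodule.span ℝ (Θ : Set (EuclideanSpace ℝ (Fin d))) = ⊤)
    (L : ℕ → ℝ) (hL1 : 0 < L 1)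
    (hLmono : ∀ j, 1 ≤ j → j < d → L j ≤ L (j + 1))
    (s : ℝ) (hs0 : 0 < s) (hs1 : s ≤ 1)
    (hsep : ∀ U V : Submodule ℝ (EuclideanSpace ℝ (Fin d)), QLat d Θ U → QLat d Θ V →
      ¬ U ≤ V → ¬ V ≤ U → ∀ ξ : EuclideanSpace ℝ (Fin d),
        ‖(Submodule.orthogonalProjectionOnto (U ⊔ V) ξ : EuclideanSpace ℝ (Fin d))‖ ≤
          (‖(Submodule.orthogonalProjectionOnto U ξ : EuclideanSpace ℝ (Fin d))‖ +
            ‖(Submodule.orthogonalProjectionOnto V ξ : EuclideanSpace ℝ (Fin d))‖) / s)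
    (R : ℝ) (hR : ∀ θ ∈ Θ, ‖θ‖ ≤ R)
    (hscale : ∀ j, 1 ≤ j → j + 1 ≤ d → 2 * d * L j / s + R ≤ L (j + 1))
    (m : ℕ) (V : Submodule ℝ (EuclideanSpace ℝ (Fin d))) (hV : QL d Θ m V)
    (ξ : EuclideanSpace ℝ (Fin d)) (hξ : ξ ∈ Xi d Θ L V) :
    (∀ η ∈ Ups d Θ L ξ, η ∈ Xi d Θ L V ∧ η - ξ ∈ V) ∧
    (∀ η ∈ Ups d Θ L ξ, ∀ η' ∈ Ups d Θ L ξ,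
      ‖η - η'‖ ≤ 2 * Real.sqrt m * L m) :=
  ups_subset_xi_and_diameter_general d Θ L hL1 hLmono s hs0 hsep R hR hscale m V hV ξ hξ
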